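/- arXiv:2601.10481 — 3 statements merged into one kernel-verified Lean document; each statement's English description precedes it below -/
import Mathlib

section
/- Let Q : (0,∞) → ℝ be continuous and satisfy the integer contraction property Q(m·r) ≤ Q(r) for all r > 0 and all positive integers m. Then Q(r) ≤ liminf_{s→0⁺} Q(s) for every r > 0; consequently the right-sided lower limit, right-sided upper limit and supremum of Q agree: liminf_{s→0⁺} Q(s) = limsup_{s→0⁺} Q(s) = sup_{r>0} Q(r) (as an equality in ℝ ∪ {+∞}). -/
open Filter Set

-- key lemma: for each r>0 and c < Q r, eventually (s→0+) c < Q s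
lemma key (Q : ℝ → ℝ)
    (hcont : ContinuousOn Q (Set.Ioi (0 : ℝ)))
    (hcontr : ∀ r : ℝ, 0 < r → ∀ m : ℕ, 0 < m → Q (m * r) ≤ Q r)
    (r : ℝ) (hr : 0 < r) (c : ℝ) (hc : c < Q r) :
    ∀ᶠ s in nhdsWithin 0 (Set.Ioi 0), c < Q s := by
  have hQat : ContinuousAt Q r :=
    (hcont r hr).continuousAt (Ioi_mem_nhds hr)
  have hset : {x : ℝ | c < Q x} ∈ nhds r :=
    hQat.eventually (Filter.Tendsto.eventually_const_lt hc Filter.tendsto_id) |>.mono (fun x hx => hx)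
  obtain ⟨δ, hδpos, hδ⟩ := Metric.mem_nhds_iff.mp hset
  have hmem : Set.Ioo (0:ℝ) δ ∈ nhdsWithin 0 (Set.Ioi 0) :=
    Ioo_mem_nhdsGT_of_mem ⟨le_refl _, hδpos⟩
  filter_upwards [hmem] with s hs
  obtain ⟨hs0, hsδ⟩ := hs
  set m : ℕ := ⌈r / s⌉₊ with hm
  have hrs : 0 < r / s := div_pos hr hs0
  have hm0 : 0 < m := Nat.ceil_pos.mpr hrs
  have h1 : r ≤ (m : ℝ) * s := by
    have := Nat.le_ceil (r / s)
    calc r = (r / s) * s := by field_simp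
    _ ≤ (m : ℝ) * s := by exact mul_le_mul_of_nonneg_right this hs0.le
  have h2 : (m : ℝ) * s < r + s := by
    have := Nat.ceil_lt_add_one hrs.le
    calc (m : ℝ) * s < (r / s + 1) * s := by exact mul_lt_mul_of_pos_right this hs0
    _ = r + s := by field_simp
  have hclose : dist ((m : ℝ) * s) r < δ := by
    rw [Real.dist_eq, abs_of_nonneg (by linarith)]
    linarith
  have : c < Q ((m : ℝ) * s) := hδ hclose
  exact lt_of_lt_of_le this (hcontr s hs0 m hm0)

theorem liminf_eq_limsup_eq_sup_of_integer_contraction (Q : ℝ → ℝ)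
    (hcont : ContinuousOn Q (Set.Ioi (0 : ℝ)))
    (hcontr : ∀ r : ℝ, 0 < r → ∀ m : ℕ, 0 < m → Q (m * r) ≤ Q r) :
    (∀ r : ℝ, 0 < r →
        ((Q r : EReal)) ≤ liminf (fun s : ℝ => ((Q s : EReal))) (nhdsWithin 0 (Set.Ioi 0)))
    ∧ liminf (fun s : ℝ => ((Q s : EReal))) (nhdsWithin 0 (Set.Ioi 0))
        = limsup (fun s : ℝ => ((Q s : EReal))) (nhdsWithin 0 (Set.Ioi 0))
    ∧ limsup (fun s : ℝ => ((Q s : EReal))) (nhdsWithin 0 (Set.Ioi 0))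
        = ⨆ (r : ℝ) (_ : 0 < r), ((Q r : EReal)) := by
  have h1 : ∀ r : ℝ, 0 < r →
      ((Q r : EReal)) ≤ liminf (fun s : ℝ => ((Q s : EReal))) (nhdsWithin 0 (Set.Ioi 0)) := by
    intro r hr
    rw [Filter.le_liminf_iff]
    intro b hb
    rcases EReal.lt_iff_exists_real_btwn.mp hb with ⟨c, hbc, hcQ⟩
    have hc : c < Q r := by exact_mod_cast hcQ
    filter_upwards [key Q hcont hcontr r hr c hc] with s hs
    exact lt_trans hbc (by exact_mod_cast hs)
  set S : EReal := ⨆ (r : ℝ) (_ : 0 < r), ((Q r : EReal)) with hS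
  have hSle : S ≤ liminf (fun s : ℝ => ((Q s : EReal))) (nhdsWithin 0 (Set.Ioi 0)) :=
    iSup₂_le h1
  have hls : limsup (fun s : ℝ => ((Q s : EReal))) (nhdsWithin 0 (Set.Ioi 0)) ≤ S := by
    apply Filter.limsup_le_of_le (by isBoundedDefault)
    filter_upwards [self_mem_nhdsWithin] with s hs
    exact le_iSup₂ (f := fun (r:ℝ) (_ : 0 < r) => ((Q r : EReal))) s hs
  have hll : liminf (fun s : ℝ => ((Q s : EReal))) (nhdsWithin 0 (Set.Ioi 0))
      ≤ limsup (fun s : ℝ => ((Q s : EReal))) (nhdsWithin 0 (Set.Ioi 0)) :=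
    liminf_le_limsup
  refine ⟨h1, le_antisymm hll ?_, le_antisymm hls ?_⟩
  · exact hls.trans hSle
  · exact le_trans hSle hll
end

section
/- Let G : ℝ → ℝ be continuous with G(0) = 0, symmetric (G(−r) = G(r) for all r), and subadditive (G(r+s) ≤ G(r) + G(s) for all r, s). Set S := sup_{r>0} G(r)/r ∈ [0,∞]. Then G is Lipschitz continuous if and only if S < ∞; in that case S is the least Lipschitz constant of G, and the right-sided derivative of G at 0 exists and equals S, i.e. lim_{r→0⁺} G(r)/r = S. -/
open Filter Set

private lemma G_nonneg' (G : ℝ → ℝ) (h0 : G 0 = 0)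
    (hsym : ∀ r : ℝ, G (-r) = G r)
    (hsub : ∀ r s : ℝ, G (r + s) ≤ G r + G s) : ∀ r, 0 ≤ G r := by
  intro r
  have h := hsub r (-r)
  rw [add_neg_cancel, h0, hsym] at h
  linarith

private lemma G_nat' (G : ℝ → ℝ) (h0 : G 0 = 0)
    (hsub : ∀ r s : ℝ, G (r + s) ≤ G r + G s) :
    ∀ (n : ℕ) (r : ℝ), G (n * r) ≤ n * G r := by
  intro n r
  induction n with
  | zero => simp [h0]
  | succ n ih =>
    have h1 : ((n : ℝ) + 1) * r = n * r + r := by ring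
    push_cast
    rw [h1]
    calc G (n * r + r) ≤ G (n * r) + G r := hsub _ _
      _ ≤ n * G r + G r := by linarith
      _ = ((n : ℝ) + 1) * G r := by ring

/-- Core liminf estimate: for each `s > 0` and `c < G s / s`,
eventually near `0⁺` we have `c < G r / r`. -/
private lemma G_key' (G : ℝ → ℝ) (hcont : Continuous G) (h0 : G 0 = 0)
    (hsym : ∀ r : ℝ, G (-r) = G r)
    (hsub : ∀ r s : ℝ, G (r + s) ≤ G r + G s)
    {s c : ℝ} (hs : 0 < s) (hc : c < G s / s) :
    ∀ᶠ r in nhdsWithin 0 (Set.Ioi 0), c < G r / r := by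
  have hnn := G_nonneg' G h0 hsym hsub
  have hcs : c * s < G s := (lt_div_iff₀ hs).mp hc
  set ε : ℝ := G s - c * s with hε
  have hε0 : 0 < ε := by linarith
  have hct : ContinuousAt G 0 := hcont.continuousAt
  obtain ⟨δ, hδ0, hδ⟩ := Metric.continuousAt_iff.mp hct ε hε0
  have hmin : (0 : ℝ) < min δ s := lt_min hδ0 hs
  filter_upwards [Ioo_mem_nhdsGT_of_mem ⟨le_refl 0, hmin⟩]
    with r hr
  obtain ⟨hr0, hrm⟩ := hr
  have hrδ : r < δ := lt_of_lt_of_le hrm (min_le_left _ _)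
  have hrs : r ≤ s := le_of_lt (lt_of_lt_of_le hrm (min_le_right _ _))
  set n : ℕ := ⌊s / r⌋₊ with hn
  have hsr0 : 0 ≤ s / r := div_nonneg hs.le hr0.le
  have hnr_le : (n : ℝ) * r ≤ s := by
    have := Nat.floor_le hsr0
    calc (n : ℝ) * r ≤ (s / r) * r := by
          apply mul_le_mul_of_nonneg_right this hr0.le
      _ = s := by field_simp
  have hlt : s < ((n : ℝ) + 1) * r := by
    have := Nat.lt_floor_add_one (s / r)
    calc s = (s / r) * r := by field_simp
      _ < ((n : ℝ) + 1) * r := by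
          apply mul_lt_mul_of_pos_right this hr0
  set ρ : ℝ := s - n * r with hρ
  have hρ0 : 0 ≤ ρ := by simp [hρ]; linarith
  have hρr : ρ < r := by simp [hρ]; nlinarith
  have hGρ : G ρ < ε := by
    have : dist ρ (0:ℝ) < δ := by
      rw [Real.dist_eq, sub_zero, abs_of_nonneg hρ0]; linarith
    have := hδ this
    rw [Real.dist_eq, h0, sub_zero] at this
    exact lt_of_le_of_lt (le_abs_self _) this
  have hGs : G s ≤ n * G r + G ρ := by
    have h1 : s = n * r + ρ := by simp [hρ]
    calc G s = G (n * r + ρ) := by rw [← h1]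
      _ ≤ G (n * r) + G ρ := hsub _ _
      _ ≤ n * G r + G ρ := by linarith [G_nat' G h0 hsub n r]
  have hnGr : (n : ℝ) * G r ≤ (s / r) * G r := by
    apply mul_le_mul_of_nonneg_right (Nat.floor_le hsr0) (hnn r)
  have hkey : c * s < (s / r) * G r := by
    calc c * s = G s - ε := by rw [hε]; ring
      _ < G s - G ρ := by linarith
      _ ≤ (n : ℝ) * G r := by linarith
      _ ≤ (s / r) * G r := hnGr
  have heq : (s / r) * G r = s * (G r / r) := by
    rw [div_mul_eq_mul_div, mul_div_assoc]
  rw [heq] at hkey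
  have h3 : c * s < (G r / r) * s := by rw [mul_comm (G r / r) s]; exact hkey
  exact lt_of_mul_lt_mul_right h3 hs.le

theorem lipschitz_iff_sup_difference_quotient_finite (G : ℝ → ℝ)
    (hcont : Continuous G) (h0 : G 0 = 0)
    (hsym : ∀ r : ℝ, G (-r) = G r)
    (hsub : ∀ r s : ℝ, G (r + s) ≤ G r + G s) :
    ((∃ L : NNReal, LipschitzWith L G) ↔
        (⨆ (r : ℝ) (_ : 0 < r), ((G r / r : ℝ) : EReal)) < ⊤)
    ∧ (∀ L : NNReal, LipschitzWith L G →
        (⨆ (r : ℝ) (_ : 0 < r), ((G r / r : ℝ) : EReal)) ≤ ((L : ℝ) : EReal))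
    ∧ ((⨆ (r : ℝ) (_ : 0 < r), ((G r / r : ℝ) : EReal)) < ⊤ →
        ∃ L : NNReal, ((L : ℝ) : EReal) = (⨆ (r : ℝ) (_ : 0 < r), ((G r / r : ℝ) : EReal))
          ∧ LipschitzWith L G)
    ∧ Tendsto (fun r : ℝ => ((G r / r : ℝ) : EReal)) (nhdsWithin 0 (Set.Ioi 0))
        (nhds (⨆ (r : ℝ) (_ : 0 < r), ((G r / r : ℝ) : EReal))) := by
  have hnn := G_nonneg' G h0 hsym hsub
  set S : EReal := ⨆ (r : ℝ) (_ : 0 < r), ((G r / r : ℝ) : EReal) with hS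
  -- S ≥ 0
  have hS0 : (0 : EReal) ≤ S := by
    have h1 : ((G 1 / 1 : ℝ) : EReal) ≤ S := by
      rw [hS]
      exact le_iSup₂ (f := fun (r:ℝ) (_ : 0 < r) => ((G r / r : ℝ) : EReal)) 1 one_pos
    refine le_trans ?_ h1
    have : (0:ℝ) ≤ G 1 / 1 := by simpa using hnn 1
    exact_mod_cast this
  have hSbot : S ≠ ⊥ := ne_bot_of_le_ne_bot (by simp) hS0
  -- Part 2 : any Lipschitz constant bounds S
  have part2 : ∀ L : NNReal, LipschitzWith L G → S ≤ ((L : ℝ) : EReal) := by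
    intro L hL
    rw [hS]
    apply iSup₂_le
    intro r hr
    have hd := hL.dist_le_mul r 0
    rw [Real.dist_eq, Real.dist_eq, h0, sub_zero, sub_zero, abs_of_pos hr] at hd
    have : G r / r ≤ (L : ℝ) := by
      rw [div_le_iff₀ hr]
      calc G r ≤ |G r| := le_abs_self _
        _ ≤ L * r := hd
    exact_mod_cast this
  -- upper bound: G t ≤ M * |t| whenever S ≤ M (real)
  have hub : ∀ (M : ℝ), S ≤ (M : EReal) → ∀ t : ℝ, G t ≤ M * |t| := by
    intro M hM t
    rcases lt_trichotomy t 0 with ht | ht | ht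
    · have h1 : ((G (-t) / (-t) : ℝ) : EReal) ≤ S := by
        rw [hS]
        exact le_iSup₂ (f := fun (r:ℝ) (_ : 0 < r) => ((G r / r : ℝ) : EReal)) (-t) (by linarith)
      have h2 : (G (-t) / (-t) : ℝ) ≤ M := by exact_mod_cast le_trans h1 hM
      rw [hsym t] at h2
      have := (div_le_iff₀ (by linarith : (0:ℝ) < -t)).mp h2
      rwa [abs_of_neg ht]
    · simp [ht, h0, mul_nonneg]
    · have h1 : ((G t / t : ℝ) : EReal) ≤ S := by
        rw [hS]
        exact le_iSup₂ (f := fun (r:ℝ) (_ : 0 < r) => ((G r / r : ℝ) : EReal)) t ht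
      have h2 : (G t / t : ℝ) ≤ M := by exact_mod_cast le_trans h1 hM
      have := (div_le_iff₀ ht).mp h2
      rwa [abs_of_pos ht]
  -- Part 3
  have part3 : S < ⊤ → ∃ L : NNReal, ((L : ℝ) : EReal) = S ∧ LipschitzWith L G := by
    intro hlt
    have htop : S ≠ ⊤ := hlt.ne
    set M : ℝ := S.toReal with hM
    have hSM : S = (M : EReal) := (EReal.coe_toReal htop hSbot).symm
    have hM0 : 0 ≤ M := by
      have : ((0:ℝ) : EReal) ≤ (M : EReal) := by rw [← hSM]; exact_mod_cast hS0
      exact_mod_cast this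
    refine ⟨⟨M, hM0⟩, by rw [hSM]; rfl, ?_⟩
    apply LipschitzWith.of_dist_le_mul
    intro x y
    have hGt := hub M (le_of_eq hSM) (x - y)
    have hGt' := hub M (le_of_eq hSM) (y - x)
    rw [Real.dist_eq, Real.dist_eq]
    have hxy : G x ≤ G y + M * |x - y| := by
      have : G x ≤ G y + G (x - y) := by
        have := hsub y (x - y)
        simpa using this
      linarith
    have habs : |y - x| = |x - y| := abs_sub_comm y x
    have hyx : G y ≤ G x + M * |x - y| := by
      have h4 : G y ≤ G x + G (y - x) := by
        have := hsub x (y - x)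
        simpa using this
      rw [habs] at hGt'
      linarith
    have : |G x - G y| ≤ M * |x - y| := abs_sub_le_iff.mpr ⟨by linarith, by linarith⟩
    exact this
  -- Part 1
  have part1 : (∃ L : NNReal, LipschitzWith L G) ↔ S < ⊤ := by
    constructor
    · rintro ⟨L, hL⟩
      exact lt_of_le_of_lt (part2 L hL) (by exact_mod_cast lt_top_iff_ne_top.mpr (EReal.coe_ne_top _))
    · intro h
      obtain ⟨L, _, hL⟩ := part3 h
      exact ⟨L, hL⟩
  refine ⟨part1, part2, part3, ?_⟩
  -- Part 4 : tendsto
  by_cases htop : S = ⊤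
  · rw [htop]
    rw [EReal.tendsto_nhds_top_iff_real]
    intro x
    have : ((x : ℝ) : EReal) < S := htop ▸ EReal.coe_lt_top x
    rw [hS, lt_iSup_iff] at this
    obtain ⟨s, hs⟩ := this
    rw [lt_iSup_iff] at hs
    obtain ⟨hs0, hxs⟩ := hs
    have hxs' : x < G s / s := by exact_mod_cast hxs
    filter_upwards [G_key' G hcont h0 hsym hsub hs0 hxs'] with r hr
    exact_mod_cast hr
  · have hlt : S < ⊤ := lt_top_iff_ne_top.mpr htop
    set M : ℝ := S.toReal with hM
    have hSM : S = (M : EReal) := (EReal.coe_toReal htop hSbot).symm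
    rw [hSM]
    rw [EReal.tendsto_coe]
    rw [tendsto_order]
    constructor
    · intro a ha
      have : ((a : ℝ) : EReal) < S := by rw [hSM]; exact_mod_cast ha
      rw [hS, lt_iSup_iff] at this
      obtain ⟨s, hs⟩ := this
      rw [lt_iSup_iff] at hs
      obtain ⟨hs0, has⟩ := hs
      have has' : a < G s / s := by exact_mod_cast has
      exact G_key' G hcont h0 hsym hsub hs0 has'
    · intro a ha
      have hb : ∀ r : ℝ, 0 < r → G r / r ≤ M := by
        intro r hr
        have h1 : ((G r / r : ℝ) : EReal) ≤ S :=
          le_iSup₂ (f := fun (r:ℝ) (_ : 0 < r) => ((G r / r : ℝ) : EReal)) r hr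
        rw [hSM] at h1
        exact_mod_cast h1
      filter_upwards [self_mem_nhdsWithin] with r hr
      exact lt_of_le_of_lt (hb r hr) ha
end

section
/- Let G : ℝ → ℝ satisfy G(0) = 0, G(−r) = G(r) for all r, and G(r+s) ≤ G(r) + G(s) for all r, s. If G is differentiable at some point r ∈ ℝ, then |G′(r)| ≤ liminf_{h→0⁺} G(h)/h. -/
open Filter Set

theorem abs_deriv_le_liminf_difference_quotient (G : ℝ → ℝ)
    (h0 : G 0 = 0)
    (hsym : ∀ r : ℝ, G (-r) = G r)
    (hsub : ∀ r s : ℝ, G (r + s) ≤ G r + G s)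
    (r : ℝ) (hdiff : DifferentiableAt ℝ G r) :
    ((|deriv G r| : ℝ) : EReal)
      ≤ liminf (fun h : ℝ => ((G h / h : ℝ) : EReal)) (nhdsWithin 0 (Set.Ioi 0)) := by
  have hd := hdiff.hasDerivAt
  rw [hasDerivAt_iff_tendsto_slope] at hd
  have hmap : Tendsto (fun h : ℝ => r + h) (nhdsWithin 0 (Set.Ioi 0)) (nhdsWithin r {r}ᶜ) := by
    apply tendsto_nhdsWithin_of_tendsto_nhds_of_eventually_within
    · have : Tendsto (fun h : ℝ => r + h) (nhds 0) (nhds (r + 0)) :=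
        (continuous_const.add continuous_id).tendsto 0
      simpa using this.mono_left nhdsWithin_le_nhds
    · filter_upwards [self_mem_nhdsWithin] with h hh
      simp only [mem_compl_iff, mem_singleton_iff]
      intro he
      have : h = 0 := by linarith [he]
      exact absurd this (ne_of_gt hh)
  have hT : Tendsto (fun h : ℝ => (G (r + h) - G r) / h) (nhdsWithin 0 (Set.Ioi 0))
      (nhds (deriv G r)) := by
    have := hd.comp hmap
    refine this.congr fun h => ?_
    simp [slope, Function.comp]
    ring
  have hTa : Tendsto (fun h : ℝ => (|(G (r + h) - G r) / h| : ℝ)) (nhdsWithin 0 (Set.Ioi 0))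
      (nhds |deriv G r|) := hT.abs
  have hTe : Tendsto (fun h : ℝ => ((|(G (r + h) - G r) / h| : ℝ) : EReal))
      (nhdsWithin 0 (Set.Ioi 0)) (nhds ((|deriv G r| : ℝ) : EReal)) :=
    (continuous_coe_real_ereal.tendsto _).comp hTa
  have heq : ((|deriv G r| : ℝ) : EReal)
      = liminf (fun h : ℝ => ((|(G (r + h) - G r) / h| : ℝ) : EReal))
          (nhdsWithin 0 (Set.Ioi 0)) := (hTe.liminf_eq).symm
  rw [heq]
  refine liminf_le_liminf ?_
  filter_upwards [self_mem_nhdsWithin] with h hh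
  have hh' : (0:ℝ) < h := hh
  have h1 : G (r + h) - G r ≤ G h := by linarith [hsub r h]
  have h2 : -(G h) ≤ G (r + h) - G r := by
    have := hsub (r + h) (-h)
    rw [hsym h] at this
    simp at this
    linarith
  have habs : |(G (r + h) - G r)| ≤ G h := abs_le.2 ⟨h2, h1⟩
  have : |(G (r + h) - G r) / h| ≤ G h / h := by
    rw [abs_div, abs_of_pos hh']
    exact div_le_div_of_nonneg_right habs hh'.le
  exact EReal.coe_le_coe_iff.2 this
end
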